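/- arXiv:1204.4313 — 10 statements merged into one kernel-verified Lean document; each statement's English description precedes it below -/
import Mathlib

section
/- Let A ⪰ 0 and B ⪰ 0 be real symmetric matrices partitioned compatibly into m×m blocks of sizes p×p and q×q respectively. Then the Khatri-Rao product A ∗ B := (A_{ij} ⊗ B_{ij})_{i,j=1}^m is positive semidefinite. -/
open scoped ComplexOrder

/-- The Khatri-Rao product is the principal submatrix of `A ⊗ₖ B` on the indices
`((i, k), (i, l))`. -/
theorem Matrix.PosSemidef.khatriRao {𝕜 ι α β : Type*} [RCLike 𝕜] [Finite ι] [Finite α]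
    [Finite β] {A : Matrix (ι × α) (ι × α) 𝕜} {B : Matrix (ι × β) (ι × β) 𝕜}
    (hA : A.PosSemidef) (hB : B.PosSemidef) :
    (Matrix.of fun x y : ι × (α × β) =>
      A (x.1, x.2.1) (y.1, y.2.1) * B (x.1, x.2.2) (y.1, y.2.2)).PosSemidef :=
  (hA.kronecker hB).submatrix fun x : ι × (α × β) => ((x.1, x.2.1), (x.1, x.2.2))

/-- Khatri-Rao product of positive semidefinite matrices: if A ⪰ 0 has m×m
blocks of size p×p and B ⪰ 0 has m×m blocks of size q×q, then the blockwise
Kronecker product A ∗ B = (A_{ij} ⊗ B_{ij})_{i,j} is positive semidefinite. -/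
theorem khatriRao_posSemidef {m p q : ℕ}
    (A : Matrix (Fin m × Fin p) (Fin m × Fin p) ℝ)
    (B : Matrix (Fin m × Fin q) (Fin m × Fin q) ℝ)
    (hA : A.PosSemidef) (hB : B.PosSemidef) :
    (Matrix.of fun x y : Fin m × (Fin p × Fin q) =>
      A (x.1, x.2.1) (y.1, y.2.1) * B (x.1, x.2.2) (y.1, y.2.2)).PosSemidef :=
  hA.khatriRao hB
end

section
/- Let A(x) = A_0 + ∑_{p=1}^n x_p A_p and B(x) = B_0 + ∑_{p=1}^n x_p B_p be linear matrix pencils with A_p ∈ S_k, B_p ∈ S_l. Suppose there exists a symmetric kl×kl matrix C = (C_{ij})_{i,j=1}^k with l×l blocks such that C ⪰ 0 and B_p = ∑_{i,j=1}^k a^p_{ij} C_{ij} for all p = 0,1,…,n, where a^p_{ij} is the (i,j) entry of A_p. Then S_A ⊆ S_B, i.e., A(x) ⪰ 0 implies B(x) ⪰ 0 for every x ∈ ℝ^n. -/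
/-!
The hypothesis says `B(x) = Φ(A(x))` for the linear map `Φ X = ∑ᵢⱼ Xᵢⱼ Cᵢⱼ`. This map is the
compression `Eᴴ (X ⊗ C) E` of a Kronecker product, where `E (i', (i, s)) t = [i' = i ∧ s = t]`,
so it sends psd matrices to psd matrices.
-/

open Matrix
open scoped Kronecker ComplexOrder

def blockContraction {R ι κ : Type*} [CommSemiring R] [Fintype ι]
    (C : Matrix (ι × κ) (ι × κ) R) : Matrix ι ι R →ₗ[R] Matrix κ κ R where
  toFun X := of fun s t => ∑ i, ∑ j, X i j * C (i, s) (j, t)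
  map_add' X Y := by ext; simp [add_mul, Finset.sum_add_distrib]
  map_smul' c X := by ext; simp [Finset.mul_sum, mul_assoc]

def diagonalEmbedding (R ι κ : Type*) [Zero R] [One R] [DecidableEq ι] [DecidableEq κ] :
    Matrix (ι × (ι × κ)) κ R :=
  of fun p t => if p.1 = p.2.1 ∧ p.2.2 = t then 1 else 0

section

variable {𝕜 ι κ : Type*} [RCLike 𝕜] [Fintype ι] [Fintype κ]

theorem blockContraction_eq_conjTranspose_mul_kronecker_mul [DecidableEq ι] [DecidableEq κ]
    (C : Matrix (ι × κ) (ι × κ) 𝕜) (X : Matrix ι ι 𝕜) :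
    blockContraction C X =
      (diagonalEmbedding 𝕜 ι κ)ᴴ * (X ⊗ₖ C) * diagonalEmbedding 𝕜 ι κ := by
  ext s t
  refine Finset.sum_comm.trans ?_
  simp [diagonalEmbedding, mul_apply, Fintype.sum_prod_type, ite_and,
    apply_ite (starRingEnd 𝕜)]

theorem posSemidef_blockContraction {C : Matrix (ι × κ) (ι × κ) 𝕜} {X : Matrix ι ι 𝕜}
    (hC : C.PosSemidef) (hX : X.PosSemidef) : (blockContraction C X).PosSemidef := by
  classical
  rw [blockContraction_eq_conjTranspose_mul_kronecker_mul]
  exact (hX.kronecker hC).conjTranspose_mul_mul_same _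

end

theorem containment_criterion_general {n k l : ℕ}
    (A : Fin (n + 1) → Matrix (Fin k) (Fin k) ℝ)
    (B : Fin (n + 1) → Matrix (Fin l) (Fin l) ℝ)
    (C : Matrix (Fin k × Fin l) (Fin k × Fin l) ℝ)
    (hC : C.PosSemidef)
    (hlin : ∀ p, B p = Matrix.of fun s t : Fin l =>
      ∑ i : Fin k, ∑ j : Fin k, A p i j * C (i, s) (j, t)) :
    {x : Fin n → ℝ | (A 0 + ∑ p : Fin n, x p • A p.succ).PosSemidef} ⊆
      {x : Fin n → ℝ | (B 0 + ∑ p : Fin n, x p • B p.succ).PosSemidef} := by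
  obtain rfl : B = fun p => blockContraction C (A p) := funext hlin
  intro x hx
  simpa only [Set.mem_ofPred_eq, map_add, map_sum, map_smul] using
    posSemidef_blockContraction hC hx

/-- Sufficient containment criterion (4.1): if there is a psd block matrix
C = (C_{ij}) with B_p = ∑_{i,j} a^p_{ij} C_{ij} for all p = 0,…,n, then
S_A ⊆ S_B for the pencils A(x) = A_0 + ∑ x_p A_p, B(x) = B_0 + ∑ x_p B_p. -/
theorem containment_criterion {n k l : ℕ}
    (A : Fin (n + 1) → Matrix (Fin k) (Fin k) ℝ)
    (B : Fin (n + 1) → Matrix (Fin l) (Fin l) ℝ)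
    (hAsymm : ∀ p, (A p).IsSymm) (hBsymm : ∀ p, (B p).IsSymm)
    (C : Matrix (Fin k × Fin l) (Fin k × Fin l) ℝ)
    (hC : C.PosSemidef)
    (hlin : ∀ p, B p = Matrix.of fun s t : Fin l =>
      ∑ i : Fin k, ∑ j : Fin k, A p i j * C (i, s) (j, t)) :
    {x : Fin n → ℝ | (A 0 + ∑ p : Fin n, x p • A p.succ).PosSemidef} ⊆
      {x : Fin n → ℝ | (B 0 + ∑ p : Fin n, x p • B p.succ).PosSemidef} :=
  containment_criterion_general A B C hC hlin
end

section
/- Let A(x), B(x) be linear pencils as above. Suppose C = (C_{ij})_{i,j=1}^k ⪰ 0 satisfies B_0 − ∑_{i,j} a^0_{ij} C_{ij} ⪰ 0 and B_p = ∑_{i,j} a^p_{ij} C_{ij} for all p = 1,…,n. Then S_A ⊆ S_B. -/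
/-!
The constraints say that `B(x) = (B₀ - Φ(A₀)) + Φ(A(x))`, where `Φ(M) = ∑ᵢⱼ Mᵢⱼ Cᵢⱼ` is the linear
map whose Choi matrix is `C`. Since `C ⪰ 0`, `Φ` is positive: `Φ(M) = Wᴴ (M' ⊙ C) W` with `M'`
the matrix `M` repeated blockwise and `W` a fixed selection matrix, so the Schur product theorem
applies. Hence `A(x) ⪰ 0` gives `B(x)` as a sum of two positive semidefinite matrices.
-/

open scoped ComplexOrder

namespace Matrix

variable {𝕜 : Type*} [RCLike 𝕜] {m n : Type*} [Fintype m]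

/-- `M ↦ ∑ᵢⱼ Mᵢⱼ Cᵢⱼ` with `Cᵢⱼ = C (i, ·) (j, ·)`: the linear map whose Choi matrix is `C`. -/
def choiMap (C : Matrix (m × n) (m × n) 𝕜) : Matrix m m 𝕜 →ₗ[𝕜] Matrix n n 𝕜 where
  toFun M := of fun s t => ∑ i, ∑ j, M i j * C (i, s) (j, t)
  map_add' M N := by
    ext s t
    simp only [add_apply, of_apply, add_mul, Finset.sum_add_distrib]
  map_smul' c M := by
    ext s t
    simp only [smul_apply, of_apply, smul_eq_mul, RingHom.id_apply, Finset.mul_sum, mul_assoc]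

theorem choiMap_apply (C : Matrix (m × n) (m × n) 𝕜) (M : Matrix m m 𝕜) :
    choiMap C M = of fun s t => ∑ i, ∑ j, M i j * C (i, s) (j, t) :=
  rfl

theorem choiMap_eq_conjTranspose_mul_hadamard_mul [Fintype n] [DecidableEq n]
    (C : Matrix (m × n) (m × n) 𝕜) (M : Matrix m m 𝕜) :
    choiMap C M =
      ((1 : Matrix n n 𝕜).submatrix Prod.snd id : Matrix (m × n) n 𝕜)ᴴ *
        (M.submatrix Prod.fst Prod.fst ⊙ C) *
          (1 : Matrix n n 𝕜).submatrix (Prod.snd : m × n → n) id := by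
  ext s t
  simp only [choiMap_apply, of_apply, conjTranspose_submatrix, conjTranspose_one, mul_apply,
    submatrix_apply, one_apply, id_eq, hadamard_apply, ite_mul, one_mul, zero_mul, mul_ite, mul_one,
    mul_zero, Fintype.sum_prod_type, Finset.sum_ite_eq, Finset.sum_ite_eq', Finset.mem_univ,
    if_true]
  exact Finset.sum_comm

theorem PosSemidef.choiMap [Fintype n] [DecidableEq n] {C : Matrix (m × n) (m × n) 𝕜}
    (hC : C.PosSemidef) {M : Matrix m m 𝕜} (hM : M.PosSemidef) :
    (Matrix.choiMap C M).PosSemidef := by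
  rw [choiMap_eq_conjTranspose_mul_hadamard_mul]
  exact ((hM.submatrix Prod.fst).hadamard hC).conjTranspose_mul_mul_same _

end Matrix

open Matrix

theorem relaxed_containment_criterion_general {n k l : ℕ}
    (A : Fin (n + 1) → Matrix (Fin k) (Fin k) ℝ)
    (B : Fin (n + 1) → Matrix (Fin l) (Fin l) ℝ)
    (C : Matrix (Fin k × Fin l) (Fin k × Fin l) ℝ)
    (hC : C.PosSemidef)
    (hconst : (B 0 - Matrix.of fun s t : Fin l =>
      ∑ i : Fin k, ∑ j : Fin k, A 0 i j * C (i, s) (j, t)).PosSemidef)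
    (hlin : ∀ p : Fin n, B p.succ = Matrix.of fun s t : Fin l =>
      ∑ i : Fin k, ∑ j : Fin k, A p.succ i j * C (i, s) (j, t)) :
    {x : Fin n → ℝ | (A 0 + ∑ p : Fin n, x p • A p.succ).PosSemidef} ⊆
      {x : Fin n → ℝ | (B 0 + ∑ p : Fin n, x p • B p.succ).PosSemidef} := by
  intro x hx
  have hB_succ : ∀ p : Fin n, B p.succ = choiMap C (A p.succ) := hlin
  have hsplit : B 0 + ∑ p : Fin n, x p • B p.succ =
      (B 0 - choiMap C (A 0)) + choiMap C (A 0 + ∑ p : Fin n, x p • A p.succ) := by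
    simp only [map_add, map_sum, map_smul, hB_succ]
    abel
  rw [Set.mem_ofPred_eq, hsplit]
  exact hconst.add (hC.choiMap hx)

/-- Relaxed containment criterion (4.2): if C ⪰ 0 satisfies
B_0 − ∑_{i,j} a^0_{ij} C_{ij} ⪰ 0 and B_p = ∑_{i,j} a^p_{ij} C_{ij} for
p = 1,…,n, then S_A ⊆ S_B. -/
theorem relaxed_containment_criterion {n k l : ℕ}
    (A : Fin (n + 1) → Matrix (Fin k) (Fin k) ℝ)
    (B : Fin (n + 1) → Matrix (Fin l) (Fin l) ℝ)
    (hAsymm : ∀ p, (A p).IsSymm) (hBsymm : ∀ p, (B p).IsSymm)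
    (C : Matrix (Fin k × Fin l) (Fin k × Fin l) ℝ)
    (hC : C.PosSemidef)
    (hconst : (B 0 - Matrix.of fun s t : Fin l =>
      ∑ i : Fin k, ∑ j : Fin k, A 0 i j * C (i, s) (j, t)).PosSemidef)
    (hlin : ∀ p : Fin n, B p.succ = Matrix.of fun s t : Fin l =>
      ∑ i : Fin k, ∑ j : Fin k, A p.succ i j * C (i, s) (j, t)) :
    {x : Fin n → ℝ | (A 0 + ∑ p : Fin n, x p • A p.succ).PosSemidef} ⊆
      {x : Fin n → ℝ | (B 0 + ∑ p : Fin n, x p • B p.succ).PosSemidef} :=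
  relaxed_containment_criterion_general A B C hC hconst hlin
end

section
/- Let A(x) ∈ S_k[x] and B(x) ∈ S_l[x] be linear pencils and suppose S_A is contained in the nonnegative orthant {x ∈ ℝ^n : x ≥ 0}. If there exists C = (C_{ij})_{i,j=1}^k ⪰ 0 with B_0 − ∑_{i,j} a^0_{ij} C_{ij} ⪰ 0 and B_p − ∑_{i,j} a^p_{ij} C_{ij} ⪰ 0 for all p = 1,…,n, then S_A ⊆ S_B. -/
/-!
Write `Φ_C(A) = contractLeft C A` for the matrix `(∑ᵢⱼ aᵢⱼ C₍ᵢ,ₛ₎₍ⱼ,ₜ₎)ₛₜ`. Since `Φ_C` is linear,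
`B(x) = (B₀ - Φ_C(A₀)) + ∑ₚ xₚ (Bₚ - Φ_C(Aₚ)) + Φ_C(A(x))`.
For `x ∈ S_A` the coefficients `xₚ` are nonnegative, so the first two summands are positive
semidefinite by hypothesis, and so is the last one: `Φ_C(A) = Eᴴ ((A ⊗ J) ⊙ C) E`, with `J` the
all-ones matrix and `E` the column of `k` identity blocks, so `Φ_C(A) ⪰ 0` for `A, C ⪰ 0` by the
Schur product theorem.
-/

open Matrix Finset
open scoped ComplexOrder

namespace Matrix

variable {𝕜 m n : Type*} [Fintype m] [Fintype n]

def contractLeft [CommSemiring 𝕜] (C : Matrix (m × n) (m × n) 𝕜) :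
    Matrix m m 𝕜 →ₗ[𝕜] Matrix n n 𝕜 where
  toFun A := of fun s t => ∑ i, ∑ j, A i j * C (i, s) (j, t)
  map_add' A A' := by
    ext s t
    simp [add_mul, sum_add_distrib]
  map_smul' c A := by
    ext s t
    simp [mul_sum, mul_assoc]

omit [Fintype n] in
lemma contractLeft_apply [CommSemiring 𝕜] (C : Matrix (m × n) (m × n) 𝕜) (A : Matrix m m 𝕜)
    (s t : n) : contractLeft C A s t = ∑ i, ∑ j, A i j * C (i, s) (j, t) := rfl

variable [RCLike 𝕜]

/- Both ascriptions of `Prod.snd` are needed: otherwise the outer `*` is elaborated before the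
row type `m × n` is known and picks up the `CStarMatrix` multiplication. -/
lemma contractLeft_eq_conjTranspose_mul_hadamard_mul [DecidableEq n]
    (C : Matrix (m × n) (m × n) 𝕜) (A : Matrix m m 𝕜) :
    contractLeft C A = ((1 : Matrix n n 𝕜).submatrix (Prod.snd : m × n → n) id)ᴴ *
      (A.submatrix Prod.fst Prod.fst ⊙ C) *
        (1 : Matrix n n 𝕜).submatrix (Prod.snd : m × n → n) id := by
  ext s t
  simp [contractLeft_apply, mul_apply, one_apply, Fintype.sum_prod_type]
  exact sum_comm

lemma PosSemidef.contractLeft {C : Matrix (m × n) (m × n) 𝕜} (hC : C.PosSemidef)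
    {A : Matrix m m 𝕜} (hA : A.PosSemidef) : (contractLeft C A).PosSemidef := by
  classical
  rw [contractLeft_eq_conjTranspose_mul_hadamard_mul]
  exact ((hA.submatrix Prod.fst).hadamard hC).conjTranspose_mul_mul_same _

end Matrix

theorem positive_orthant_containment_criterion_general {n k l : ℕ}
    (A : Fin (n + 1) → Matrix (Fin k) (Fin k) ℝ)
    (B : Fin (n + 1) → Matrix (Fin l) (Fin l) ℝ)
    (horthant : ∀ x : Fin n → ℝ,
      (A 0 + ∑ p : Fin n, x p • A p.succ).PosSemidef → ∀ p, 0 ≤ x p)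
    (C : Matrix (Fin k × Fin l) (Fin k × Fin l) ℝ)
    (hC : C.PosSemidef)
    (hpsd : ∀ p : Fin (n + 1), (B p - Matrix.of fun s t : Fin l =>
      ∑ i : Fin k, ∑ j : Fin k, A p i j * C (i, s) (j, t)).PosSemidef) :
    {x : Fin n → ℝ | (A 0 + ∑ p : Fin n, x p • A p.succ).PosSemidef} ⊆
      {x : Fin n → ℝ | (B 0 + ∑ p : Fin n, x p • B p.succ).PosSemidef} := by
  intro x (hA : (A 0 + ∑ p, x p • A p.succ).PosSemidef)
  set Φ := contractLeft C
  have hΦ : ∀ p, (B p - Φ (A p)).PosSemidef := hpsd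
  have hx : ∀ p, 0 ≤ x p := horthant x hA
  have hsplit : B 0 + ∑ p, x p • B p.succ =
      (B 0 - Φ (A 0)) + ∑ p, x p • (B p.succ - Φ (A p.succ)) + Φ (A 0 + ∑ p, x p • A p.succ) := by
    simp only [map_add, map_sum, map_smul, smul_sub, sum_sub_distrib]
    abel
  show (B 0 + ∑ p, x p • B p.succ).PosSemidef
  rw [hsplit]
  exact ((hΦ 0).add (posSemidef_sum _ fun p _ => (hΦ p.succ).smul (hx p))).add
    (hC.contractLeft hA)

/-- Containment criterion for spectrahedra in the nonnegative orthant (4.5):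
if S_A lies in the nonnegative orthant and C ⪰ 0 satisfies
B_p − ∑_{i,j} a^p_{ij} C_{ij} ⪰ 0 for all p = 0,…,n, then S_A ⊆ S_B. -/
theorem positive_orthant_containment_criterion {n k l : ℕ}
    (A : Fin (n + 1) → Matrix (Fin k) (Fin k) ℝ)
    (B : Fin (n + 1) → Matrix (Fin l) (Fin l) ℝ)
    (hAsymm : ∀ p, (A p).IsSymm) (hBsymm : ∀ p, (B p).IsSymm)
    (horthant : ∀ x : Fin n → ℝ,
      (A 0 + ∑ p : Fin n, x p • A p.succ).PosSemidef → ∀ p, 0 ≤ x p)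
    (C : Matrix (Fin k × Fin l) (Fin k × Fin l) ℝ)
    (hC : C.PosSemidef)
    (hpsd : ∀ p : Fin (n + 1), (B p - Matrix.of fun s t : Fin l =>
      ∑ i : Fin k, ∑ j : Fin k, A p i j * C (i, s) (j, t)).PosSemidef) :
    {x : Fin n → ℝ | (A 0 + ∑ p : Fin n, x p • A p.succ).PosSemidef} ⊆
      {x : Fin n → ℝ | (B 0 + ∑ p : Fin n, x p • B p.succ).PosSemidef} :=
  positive_orthant_containment_criterion_general A B horthant C hC hpsd
end

section
/- Transitivity of the containment criterion: let D(x) ∈ S_d[x], E(x) ∈ S_e[x], F(x) ∈ S_f[x] be linear pencils in n variables. Suppose C^{DE} ⪰ 0 (d×d blocks of size e×e) satisfies E_p = ∑_{i,j=1}^d d^p_{ij} C^{DE}_{ij} for p = 0,…,n, and C^{EF} ⪰ 0 (e×e blocks of size f×f) satisfies F_p = ∑_{s,t=1}^e e^p_{st} C^{EF}_{st} for p = 0,…,n. Then the matrix C^{DF} with blocks C^{DF}_{ij} := ∑_{s,t=1}^e (C^{DE}_{ij})_{st} C^{EF}_{st} is positive semidefinite and satisfies F_p = ∑_{i,j=1}^d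 d^p_{ij} C^{DF}_{ij} for all p = 0,…,n. -/
/-!
Read `C^{DF}` as the Gram-type compression `Vᴴ (C^{DE} ⊗ C^{EF}) V`, where the 0/1 matrix `V`
glues the second index of a `C^{DE}`-entry to the first index of a `C^{EF}`-entry and sums over
it; positive semidefiniteness is then inherited from the Kronecker product. The certificate
identity is associativity of the double contraction `∑ᵢⱼ dᵢⱼ (∑ₛₜ (C^{DE}ᵢⱼ)ₛₜ C^{EF}ₛₜ)`.
-/

open scoped Kronecker ComplexOrder

namespace Matrix

variable {ι κ ν R : Type*} [Fintype ι] [Fintype κ]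

/-- The pencil coefficient `∑ᵢⱼ dᵢⱼ Cᵢⱼ` obtained from `D` through the block matrix `C`, whose
`(i, j)` block is `C (i, ·) (j, ·)`. -/
def blockWeightedSum [NonUnitalNonAssocSemiring R] (D : Matrix ι ι R)
    (C : Matrix (ι × κ) (ι × κ) R) : Matrix κ κ R :=
  of fun s t => ∑ i, ∑ j, D i j * C (i, s) (j, t)

def blockCompose [NonUnitalNonAssocSemiring R] (C₁ : Matrix (ι × κ) (ι × κ) R)
    (C₂ : Matrix (κ × ν) (κ × ν) R) : Matrix (ι × ν) (ι × ν) R :=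
  of fun x y => ∑ s, ∑ t, C₁ (x.1, s) (y.1, t) * C₂ (s, x.2) (t, y.2)

theorem blockWeightedSum_blockWeightedSum [NonUnitalSemiring R] (D : Matrix ι ι R)
    (C₁ : Matrix (ι × κ) (ι × κ) R) (C₂ : Matrix (κ × ν) (κ × ν) R) :
    blockWeightedSum (blockWeightedSum D C₁) C₂ = blockWeightedSum D (blockCompose C₁ C₂) := by
  ext a b
  simp only [blockWeightedSum, blockCompose, of_apply, Finset.sum_mul, Finset.mul_sum, mul_assoc]
  rw [Finset.sum_comm_cycle]
  exact Finset.sum_congr rfl fun _ _ => Finset.sum_comm_cycle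

variable (ι κ ν R) in
def contractionMatrix [DecidableEq ι] [DecidableEq κ] [DecidableEq ν] [Zero R] [One R] :
    Matrix ((ι × κ) × (κ × ν)) (ι × ν) R :=
  of fun p x => if p.1.1 = x.1 ∧ p.1.2 = p.2.1 ∧ p.2.2 = x.2 then 1 else 0

theorem blockCompose_eq_conjTranspose_mul_kronecker_mul [DecidableEq ι] [DecidableEq κ]
    [DecidableEq ν] [Fintype ν] [CommSemiring R] [StarRing R]
    (C₁ : Matrix (ι × κ) (ι × κ) R) (C₂ : Matrix (κ × ν) (κ × ν) R) :
    blockCompose C₁ C₂ =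
      (contractionMatrix ι κ ν R)ᴴ * (C₁ ⊗ₖ C₂) * contractionMatrix ι κ ν R := by
  ext x y
  simp only [blockCompose, contractionMatrix, of_apply, ite_and, mul_apply, conjTranspose_apply,
    apply_ite star, star_one, star_zero, kroneckerMap_apply, ite_mul, one_mul, zero_mul,
    Fintype.sum_prod_type, Finset.sum_ite_irrel, Finset.sum_ite_eq', Finset.mem_univ,
    if_true, Finset.sum_const_zero, Finset.sum_ite_eq, mul_ite, mul_one, mul_zero]
  exact Finset.sum_comm

theorem PosSemidef.blockCompose {𝕜 : Type*} [RCLike 𝕜] [Fintype ν]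
    {C₁ : Matrix (ι × κ) (ι × κ) 𝕜} {C₂ : Matrix (κ × ν) (κ × ν) 𝕜}
    (h₁ : C₁.PosSemidef) (h₂ : C₂.PosSemidef) : (Matrix.blockCompose C₁ C₂).PosSemidef := by
  classical
  rw [blockCompose_eq_conjTranspose_mul_kronecker_mul]
  exact (h₁.kronecker h₂).conjTranspose_mul_mul_same _

end Matrix

/-- Transitivity of the containment criterion: if C^{DE} certifies the pencil
relation D → E and C^{EF} certifies E → F, then the matrix C^{DF} with blocks
C^{DF}_{ij} = ∑_{s,t} (C^{DE}_{ij})_{st} C^{EF}_{st} is positive semidefinite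
and certifies D → F. -/
theorem containment_criterion_transitive {n d e f : ℕ}
    (D : Fin (n + 1) → Matrix (Fin d) (Fin d) ℝ)
    (E : Fin (n + 1) → Matrix (Fin e) (Fin e) ℝ)
    (F : Fin (n + 1) → Matrix (Fin f) (Fin f) ℝ)
    (CDE : Matrix (Fin d × Fin e) (Fin d × Fin e) ℝ)
    (CEF : Matrix (Fin e × Fin f) (Fin e × Fin f) ℝ)
    (hCDE : CDE.PosSemidef) (hCEF : CEF.PosSemidef)
    (hDE : ∀ p, E p = Matrix.of fun s t : Fin e =>
      ∑ i : Fin d, ∑ j : Fin d, D p i j * CDE (i, s) (j, t))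
    (hEF : ∀ p, F p = Matrix.of fun a b : Fin f =>
      ∑ s : Fin e, ∑ t : Fin e, E p s t * CEF (s, a) (t, b)) :
    (Matrix.of fun x y : Fin d × Fin f =>
      ∑ s : Fin e, ∑ t : Fin e,
        CDE (x.1, s) (y.1, t) * CEF (s, x.2) (t, y.2)).PosSemidef ∧
    ∀ p, F p = Matrix.of fun a b : Fin f =>
      ∑ i : Fin d, ∑ j : Fin d, D p i j *
        (∑ s : Fin e, ∑ t : Fin e, CDE (i, s) (j, t) * CEF (s, a) (t, b)) := by
  refine ⟨hCDE.blockCompose hCEF, fun p => ?_⟩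
  have hE : E p = (D p).blockWeightedSum CDE := hDE p
  have hF : F p = (E p).blockWeightedSum CEF := hEF p
  rw [hF, hE]
  exact Matrix.blockWeightedSum_blockWeightedSum (D p) CDE CEF
end

section
/- Block diagonal reduction of the containment criterion: let A(x) ∈ S_k[x] and B(x) = ⨁_{q=1}^m D^q(x) with D^q(x) ∈ S_{d_q}[x]. Then there exists C = (C_{ij})_{i,j=1}^k ⪰ 0 with B_p = ∑_{i,j} a^p_{ij} C_{ij} for all p = 0,…,n if and only if for each q = 1,…,m there exists C^q = (C^q_{ij})_{i,j=1}^k ⪰ 0 with D^q_p = ∑_{i,j} a^p_{ij} C^q_{ij} for all p = 0,…,n. -/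
/-!
A solution `C` of the big system restricts, on the rows and columns of the `q`-th diagonal block,
to a positive semidefinite principal submatrix solving the `q`-th system. Conversely, the
solutions `C^q` assembled into `⨁_q C^q` and reindexed from `Σ q, k × d_q` to `k × Σ q, d_q`
give a positive semidefinite solution of the big system, because forming `∑ a_ij C_ij` commutes
with this block-diagonal assembly.
-/

namespace Matrix

variable {ι o R : Type*} {d : o → Type*}

theorem blockDiagonal'_submatrix_sigmaMk [DecidableEq o] [Zero R] (M : ∀ q, Matrix (d q) (d q) R)
    (q : o) : (blockDiagonal' M).submatrix (Sigma.mk q) (Sigma.mk q) = M q := by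
  ext s t
  exact blockDiagonal'_apply_eq M q s t

theorem star_dotProduct_blockDiagonal'_mulVec [Fintype o] [DecidableEq o] [∀ q, Fintype (d q)]
    [NonUnitalNonAssocSemiring R] [Star R] (M : ∀ q, Matrix (d q) (d q) R)
    (x : (Σ q, d q) → R) :
    star x ⬝ᵥ (blockDiagonal' M *ᵥ x) =
      ∑ q, star (fun s => x ⟨q, s⟩) ⬝ᵥ (M q *ᵥ fun s => x ⟨q, s⟩) := by
  simp only [dotProduct, mulVec, Fintype.sum_sigma, Pi.star_apply]
  refine Fintype.sum_congr _ _ fun q => Fintype.sum_congr _ _ fun s => ?_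
  congr 1
  rw [Fintype.sum_eq_single q fun q' hq' => ?_]
  · simp only [blockDiagonal'_apply_eq]
  · exact Fintype.sum_eq_zero _ fun t => by
      rw [blockDiagonal'_apply_ne M s t (Ne.symm hq'), zero_mul]

theorem PosSemidef.blockDiagonal' [Fintype o] [DecidableEq o] [∀ q, Fintype (d q)]
    [Ring R] [PartialOrder R] [StarRing R] [IsOrderedAddMonoid R]
    {M : ∀ q, Matrix (d q) (d q) R} (hM : ∀ q, (M q).PosSemidef) :
    (Matrix.blockDiagonal' M).PosSemidef := by
  refine .of_dotProduct_mulVec_nonneg (isHermitian_blockDiagonal'_iff.mpr fun q => (hM q).1)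
    fun x => ?_
  rw [star_dotProduct_blockDiagonal'_mulVec]
  exact Finset.sum_nonneg fun q _ => (hM q).dotProduct_mulVec_nonneg _

def blockCombination [Fintype ι] [Mul R] [AddCommMonoid R] {α β : Type*} (A : Matrix ι ι R)
    (C : Matrix (ι × α) (ι × β) R) : Matrix α β R :=
  of fun s t => ∑ i, ∑ j, A i j * C (i, s) (j, t)

theorem blockCombination_submatrix [Fintype ι] [Mul R] [AddCommMonoid R] {α β γ δ : Type*}
    (A : Matrix ι ι R) (C : Matrix (ι × α) (ι × β) R) (f : γ → α) (g : δ → β) :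
    blockCombination A (C.submatrix (Prod.map id f) (Prod.map id g)) =
      (blockCombination A C).submatrix f g :=
  rfl

theorem blockCombination_blockDiagonal' [Fintype ι] [DecidableEq o]
    [NonUnitalNonAssocSemiring R]
    (A : Matrix ι ι R) (C : ∀ q, Matrix (ι × d q) (ι × d q) R) :
    blockCombination A ((blockDiagonal' C).submatrix
        (fun is => ⟨is.2.1, (is.1, is.2.2)⟩) (fun is => ⟨is.2.1, (is.1, is.2.2)⟩)) =
      blockDiagonal' fun q => blockCombination A (C q) := by
  ext ⟨q, s⟩ ⟨q', t⟩
  rcases eq_or_ne q q' with rfl | hq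
  · simp [blockCombination, blockDiagonal'_apply_eq]
  · simp [blockCombination, blockDiagonal'_apply_ne _ _ _ hq]

end Matrix

open Matrix

/-- Block diagonal reduction of the containment criterion: for
B(x) = ⨁_q D^q(x), the system for (A, B) is feasible iff the system for
(A, D^q) is feasible for each q. -/
theorem containment_criterion_block_diagonal {n k m : ℕ} (d : Fin m → ℕ)
    (A : Fin (n + 1) → Matrix (Fin k) (Fin k) ℝ)
    (D : (q : Fin m) → Fin (n + 1) → Matrix (Fin (d q)) (Fin (d q)) ℝ) :
    (∃ C : Matrix (Fin k × ((q : Fin m) × Fin (d q)))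
        (Fin k × ((q : Fin m) × Fin (d q))) ℝ,
      C.PosSemidef ∧ ∀ p, Matrix.blockDiagonal' (fun q => D q p) =
        Matrix.of fun s t : (q : Fin m) × Fin (d q) =>
          ∑ i : Fin k, ∑ j : Fin k, A p i j * C (i, s) (j, t)) ↔
    (∀ q : Fin m, ∃ Cq : Matrix (Fin k × Fin (d q)) (Fin k × Fin (d q)) ℝ,
      Cq.PosSemidef ∧ ∀ p, D q p =
        Matrix.of fun s t : Fin (d q) =>
          ∑ i : Fin k, ∑ j : Fin k, A p i j * Cq (i, s) (j, t)) := by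
  constructor
  · rintro ⟨C, hC, hB⟩ q
    let e : Fin k × Fin (d q) → Fin k × (Σ r, Fin (d r)) :=
      Prod.map id (Sigma.mk (β := fun r => Fin (d r)) q)
    refine ⟨C.submatrix e e, hC.submatrix e, fun p => ?_⟩
    rw [← blockDiagonal'_submatrix_sigmaMk (fun q => D q p) q, hB p]
    exact (blockCombination_submatrix (A p) C _ _).symm
  · intro h
    choose C hC hD using h
    let e : Fin k × (Σ q, Fin (d q)) → Σ q, Fin k × Fin (d q) :=
      fun is => ⟨is.2.1, (is.1, is.2.2)⟩
    refine ⟨(blockDiagonal' C).submatrix e e, (PosSemidef.blockDiagonal' hC).submatrix e,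
      fun p => ?_⟩
    rw [funext (hD · p)]
    exact (blockCombination_blockDiagonal' (A p) C).symm
end

section
/- Exactness for axis-aligned ellipsoids: let A(x) = I_{n+1} + ∑_{p=1}^n (x_p/a_p)(E_{p,n+1} + E_{n+1,p}) and B(x) = I_{n+1} + ∑_{p=1}^n (x_p/b_p)(E_{p,n+1} + E_{n+1,p}) with a_p, b_p > 0, and suppose a_p ≤ b_p for all p (equivalently S_A ⊆ S_B). Then the (n+1)²×(n+1)² block matrix C defined by (C_{ij})_{st} = 1 if i=j=s=t; = a_j/b_j if i=s=n+1, j=t≤n; = a_i/b_i if i=s≤n, j=t=n+1; = (a_i a_j)/(b_i b_j) if i=s≤n, j=t≤n, i≠j; and 0 otherwise, is positive semidefinite, satisfies ∑_{i=1}^{n+1} C_{ii} = I_{n+1}, and B_p = ∑_{i,j=1}^{n+1} a^p_{ij} C_{ij} for all p = 1,…,n. -/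
/-- Coefficient matrix A_p = (1/a_p)(E_{p,n+1} + E_{n+1,p}) of the normal form
of an axis-aligned ellipsoid with semi-axes a. -/
noncomputable def ellCoeff {n : ℕ} (a : Fin n → ℝ) (p : Fin n) :
    Matrix (Fin (n + 1)) (Fin (n + 1)) ℝ :=
  (a p)⁻¹ • (Matrix.single p.castSucc (Fin.last n) 1 +
    Matrix.single (Fin.last n) p.castSucc 1)

/-- The explicit certificate matrix C from Lemma 4.10 for the containment of
one axis-aligned ellipsoid in another. -/
noncomputable def ellCert {n : ℕ} (a b : Fin n → ℝ) :
    Matrix (Fin (n + 1) × Fin (n + 1)) (Fin (n + 1) × Fin (n + 1)) ℝ :=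
  Matrix.of fun x y =>
    if x.1 = y.1 ∧ y.1 = x.2 ∧ x.2 = y.2 then 1
    else if h : x.1 = Fin.last n ∧ x.2 = Fin.last n ∧ y.1 = y.2 ∧
        y.1 ≠ Fin.last n then
      a (y.1.castPred h.2.2.2) / b (y.1.castPred h.2.2.2)
    else if h : y.1 = Fin.last n ∧ y.2 = Fin.last n ∧ x.1 = x.2 ∧
        x.1 ≠ Fin.last n then
      a (x.1.castPred h.2.2.2) / b (x.1.castPred h.2.2.2)
    else if h : x.1 = x.2 ∧ y.1 = y.2 ∧ x.1 ≠ Fin.last n ∧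
        y.1 ≠ Fin.last n ∧ x.1 ≠ y.1 then
      (a (x.1.castPred h.2.2.1) * a (y.1.castPred h.2.2.2.1)) /
        (b (x.1.castPred h.2.2.1) * b (y.1.castPred h.2.2.2.1))
    else 0

/-!
Put r_p = a_p / b_p and r_{n+1} = 1. The certificate lives on the index pairs (i, i), where it is
the rank-one matrix r rᵀ with its diagonal replaced by 1; so C = v vᵀ + diag(1 - r_i²) with
v_{(i,i)} = r_i, which is positive semidefinite because a_p ≤ b_p gives r_p² ≤ 1. The diagonal
blocks are C_{ii} = E_{ii}, and contracting with A_p only sees the blocks C_{p,n+1} = r_p E_{p,n+1}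
and C_{n+1,p} = r_p E_{n+1,p}, which gives (r_p / a_p)(E_{p,n+1} + E_{n+1,p}) = B_p.
-/

open Matrix

section RatioCert

variable {ι : Type*} [DecidableEq ι]

noncomputable def ratioCert (r : ι → ℝ) : Matrix (ι × ι) (ι × ι) ℝ :=
  of fun x y => if x.1 = x.2 ∧ y.1 = y.2 then (if x.1 = y.1 then 1 else r x.1 * r y.1) else 0

def diagLift (f : ι → ℝ) : ι × ι → ℝ := fun x => if x.1 = x.2 then f x.1 else 0

lemma ratioCert_eq_vecMulVec_add_diagonal (r : ι → ℝ) :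
    ratioCert r = vecMulVec (diagLift r) (diagLift r) + diagonal (diagLift (1 - r ^ 2)) := by
  ext ⟨i, j⟩ ⟨s, t⟩
  simp only [ratioCert, diagLift, of_apply, Matrix.add_apply, vecMulVec_apply, diagonal_apply,
    Prod.ext_iff, Pi.sub_apply, Pi.one_apply, Pi.pow_apply]
  split_ifs <;> simp_all
  ring

lemma ratioCert_posSemidef [Fintype ι] {r : ι → ℝ} (hr : ∀ i, r i ^ 2 ≤ 1) :
    (ratioCert r).PosSemidef := by
  have hv : (vecMulVec (diagLift r) (diagLift r)).PosSemidef := by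
    simpa using posSemidef_vecMulVec_self_star (diagLift r)
  rw [ratioCert_eq_vecMulVec_add_diagonal]
  refine hv.add (posSemidef_diagonal_iff.mpr fun x => ?_)
  unfold diagLift
  split_ifs
  · exact sub_nonneg.mpr (hr x.1)
  · exact le_rfl

lemma sum_ratioCert_diag_block [Fintype ι] (r : ι → ℝ) (s t : ι) :
    ∑ i, ratioCert r (i, s) (i, t) = (1 : Matrix ι ι ℝ) s t := by
  by_cases hst : s = t
  · subst hst
    simp [ratioCert]
  · simp [ratioCert, hst]

lemma ratioCert_apply_of_ne (r : ι → ℝ) {α β : ι} (h : α ≠ β) (s t : ι) :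
    ratioCert r (α, s) (β, t) = r α * r β * single α β 1 s t := by
  simp [ratioCert, single_apply, h]

end RatioCert

lemma sum_sum_single_mul {ι R : Type*} [Fintype ι] [DecidableEq ι] [Semiring R] (α β : ι) (c : R)
    (g : ι → ι → R) : ∑ i, ∑ j, single α β c i j * g i j = c * g α β := by
  simp [single_apply, ite_and]

noncomputable def axisRatio {n : ℕ} (a b : Fin n → ℝ) : Fin (n + 1) → ℝ :=
  Fin.lastCases 1 fun p => a p / b p

lemma ellCert_eq_ratioCert {n : ℕ} (a b : Fin n → ℝ) :
    ellCert a b = ratioCert (axisRatio a b) := by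
  ext ⟨i, j⟩ ⟨s, t⟩
  induction i using Fin.lastCases <;> induction j using Fin.lastCases <;>
    induction s using Fin.lastCases <;> induction t using Fin.lastCases <;>
    simp [ellCert, ratioCert, axisRatio, div_mul_div_comm, eq_comm]
  grind

lemma axisRatio_sq_le_one {n : ℕ} {a b : Fin n → ℝ} (ha : ∀ p, 0 ≤ a p) (hab : ∀ p, a p ≤ b p)
    (i : Fin (n + 1)) : axisRatio a b i ^ 2 ≤ 1 := by
  induction i using Fin.lastCases with
  | last => simp [axisRatio]
  | cast p =>
    rw [axisRatio, Fin.lastCases_castSucc]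
    exact pow_le_one₀ (div_nonneg (ha p) ((ha p).trans (hab p)))
      (div_le_one_of_le₀ (hab p) ((ha p).trans (hab p)))

lemma sum_sum_ellCoeff_mul {n : ℕ} (a : Fin n → ℝ) (p : Fin n)
    (g : Fin (n + 1) → Fin (n + 1) → ℝ) :
    ∑ i, ∑ j, ellCoeff a p i j * g i j =
      (a p)⁻¹ * (g p.castSucc (Fin.last n) + g (Fin.last n) p.castSucc) := by
  simp only [ellCoeff, Matrix.smul_apply, Matrix.add_apply, smul_eq_mul, mul_assoc, add_mul,
    mul_add, Finset.sum_add_distrib, ← Finset.mul_sum, sum_sum_single_mul, one_mul]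

theorem ellipsoid_containment_exact_general {n : ℕ} (a b : Fin n → ℝ)
    (ha : ∀ p, 0 < a p) (hab : ∀ p, a p ≤ b p) :
    (ellCert a b).PosSemidef ∧
    (∀ s t : Fin (n + 1), (∑ i : Fin (n + 1), ellCert a b (i, s) (i, t)) =
      (1 : Matrix (Fin (n + 1)) (Fin (n + 1)) ℝ) s t) ∧
    (∀ p : Fin n, ellCoeff b p = Matrix.of fun s t : Fin (n + 1) =>
      ∑ i : Fin (n + 1), ∑ j : Fin (n + 1),
        ellCoeff a p i j * ellCert a b (i, s) (j, t)) := by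
  rw [ellCert_eq_ratioCert]
  refine ⟨ratioCert_posSemidef (axisRatio_sq_le_one (fun p => (ha p).le) hab),
    sum_ratioCert_diag_block _, fun p => ?_⟩
  have hp : p.castSucc ≠ Fin.last n := Fin.castSucc_ne_last p
  ext s t
  rw [of_apply, sum_sum_ellCoeff_mul, ratioCert_apply_of_ne _ hp, ratioCert_apply_of_ne _ hp.symm]
  simp only [ellCoeff, axisRatio, Fin.lastCases_castSucc, Fin.lastCases_last, Matrix.smul_apply,
    Matrix.add_apply, smul_eq_mul]
  field_simp [(ha p).ne']

/-- Exactness of the containment criterion for axis-aligned ellipsoids: if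
a_p ≤ b_p for all p, the explicit matrix `ellCert a b` is psd, its diagonal
blocks sum to the identity, and B_p = ∑_{i,j} a^p_{ij} C_{ij} for all p. -/
theorem ellipsoid_containment_exact {n : ℕ} (a b : Fin n → ℝ)
    (ha : ∀ p, 0 < a p) (hb : ∀ p, 0 < b p) (hab : ∀ p, a p ≤ b p) :
    (ellCert a b).PosSemidef ∧
    (∀ s t : Fin (n + 1), (∑ i : Fin (n + 1), ellCert a b (i, s) (i, t)) =
      (1 : Matrix (Fin (n + 1)) (Fin (n + 1)) ℝ) s t) ∧
    (∀ p : Fin n, ellCoeff b p = Matrix.of fun s t : Fin (n + 1) =>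
      ∑ i : Fin (n + 1), ∑ j : Fin (n + 1),
        ellCoeff a p i j * ellCert a b (i, s) (j, t)) :=
  ellipsoid_containment_exact_general a b ha hab
end

section
/- Inexactness example: let A(x) = I_3 + x_1(E_{1,3}+E_{3,1}) + x_2(E_{2,3}+E_{3,2}) ∈ S_3[x]. There is no positive semidefinite 6×6 matrix C = (C_{ij})_{i,j=1}^3 with 2×2 blocks satisfying I_2 = ∑_{i=1}^3 C_{ii}, diag(1,−1) = C_{13} + C_{31}, and offdiag(1,1) = C_{23} + C_{32}, even though S_A equals the unit disc S_B for B(x) = I_2 + x_1 diag(1,−1) + x_2 (E_{12}+E_{21}). -/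
/-!
Compare the 2×2 principal minors of `C` on the indices `(0, s), (2, s)`: the second condition
forces `|C (0, s) (2, s)| = 1/2`, so `C (0, s) (0, s) + C (2, s) (2, s) ≥ 1`, and the trace
condition then leaves `C (1, s) (1, s) = 0` for both `s`. A psd matrix with a zero diagonal entry
has that whole row zero, so the entries `C (1, 0) (2, 1)` and `C (2, 0) (1, 1) = C (1, 1) (2, 0)`
vanish, contradicting the `(0, 1)` entry of the third condition.
-/

namespace Matrix.PosSemidef

variable {n : Type*} {M : Matrix n n ℝ}

theorem apply_symm (hM : M.PosSemidef) (u v : n) : M v u = M u v := by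
  simpa using hM.isHermitian.apply u v

theorem apply_sq_le_mul_diag (hM : M.PosSemidef) (u v : n) : M u v ^ 2 ≤ M u u * M v v := by
  have hdet := (hM.submatrix ![u, v]).det_nonneg
  rw [det_fin_two] at hdet
  simp only [submatrix_apply, Matrix.cons_val_zero, Matrix.cons_val_one] at hdet
  rw [hM.apply_symm u v] at hdet
  linarith

theorem two_mul_abs_apply_le (hM : M.PosSemidef) (u v : n) : 2 * |M u v| ≤ M u u + M v v := by
  have hsq := hM.apply_sq_le_mul_diag u v
  have hu := hM.diag_nonneg (i := u)
  have hv := hM.diag_nonneg (i := v)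
  calc 2 * |M u v| = |2 * M u v| := by rw [abs_mul, abs_two]
    _ ≤ M u u + M v v :=
      abs_le_of_sq_le_sq (by nlinarith [sq_nonneg (M u u - M v v)]) (add_nonneg hu hv)

theorem apply_eq_zero_of_diag_eq_zero (hM : M.PosSemidef) {u : n} (hu : M u u = 0) (v : n) :
    M u v = 0 := by
  have := hM.apply_sq_le_mul_diag u v
  rw [hu, zero_mul] at this
  exact pow_eq_zero_iff two_ne_zero |>.mp (le_antisymm this (sq_nonneg _))

end Matrix.PosSemidef

/-- Inexactness of the containment criterion (Example of Section 5.1): for the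
pencil A(x) = I₃ + x₁(E₁₃+E₃₁) + x₂(E₂₃+E₃₂) of the unit disc and the pencil
B(x) = I₂ + x₁ diag(1,−1) + x₂(E₁₂+E₂₁) of the same disc, there is no psd
6×6 matrix C = (C_{ij}) with 2×2 blocks satisfying I₂ = ∑ᵢ C_{ii},
diag(1,−1) = C₁₃ + C₃₁ and E₁₂+E₂₁ = C₂₃ + C₃₂. -/
theorem disc_criterion_inexact :
    ¬ ∃ C : Matrix (Fin 3 × Fin 2) (Fin 3 × Fin 2) ℝ,
      C.PosSemidef ∧
      (∀ s t : Fin 2, (∑ i : Fin 3, C (i, s) (i, t)) =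
        (1 : Matrix (Fin 2) (Fin 2) ℝ) s t) ∧
      (∀ s t : Fin 2, C (0, s) (2, t) + C (2, s) (0, t) =
        !![(1 : ℝ), 0; 0, -1] s t) ∧
      (∀ s t : Fin 2, C (1, s) (2, t) + C (2, s) (1, t) =
        !![(0 : ℝ), 1; 1, 0] s t) := by
  rintro ⟨C, hC, htrace, hx₁, hx₂⟩
  have hdiag : ∀ s, C (1, s) (1, s) = 0 := by
    intro s
    have htr := htrace s s
    have hoff : |C (0, s) (2, s) + C (2, s) (0, s)| = 1 := by
      fin_cases s <;> simp [hx₁]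
    rw [Fin.sum_univ_three, Matrix.one_apply_eq] at htr
    rw [hC.apply_symm (0, s) (2, s), ← two_mul, abs_mul, abs_two] at hoff
    linarith [hC.two_mul_abs_apply_le (0, s) (2, s), hC.diag_nonneg (i := (1, s))]
  have h := hx₂ 0 1
  rw [hC.apply_symm (1, 1) (2, 0), hC.apply_eq_zero_of_diag_eq_zero (hdiag 0),
    hC.apply_eq_zero_of_diag_eq_zero (hdiag 1)] at h
  simp at h
end

section
/- In the same example, the criterion certifies the scaled inclusion: for 0 < r ≤ √2/2, the 6×6 matrix C with c = 1/4 given by C = [[c,0,0,c,r/2,0],[0,c,−c,0,0,−r/2],[0,−c,c,0,0,r/2],[c,0,0,c,r/2,0],[r/2,0,0,r/2,1−2c,0],[0,−r/2,r/2,0,0,1−2c]] is positive semidefinite and satisfies I_2 = ∑_{i=1}^3 C_{ii}, diag(1,−1) = (1/r)(C_{13}+C_{31}), and E_{12}+E_{21} = (1/r)(C_{23}+C_{32}). -/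
/-!
Completing the square in the quadratic form of `scaledDiscCert r` writes the matrix as two
rank-one Gram terms plus `(1/2 - r²)` on the diagonal of the third block row (the Schur
complement of the top-left block `c I₂` at `c = 1/4`), so it is positive semidefinite as soon
as `r² ≤ 1/2`.
-/

/-- The explicit 6×6 certificate matrix (with c = 1/4) for the containment of
the disc of radius r in the unit disc, indexed by 3×3 blocks of size 2×2. -/
noncomputable def scaledDiscCert (r : ℝ) :
    Matrix (Fin 3 × Fin 2) (Fin 3 × Fin 2) ℝ :=
  Matrix.of fun p q =>
    (!![1/4, 0, 0, 1/4, r/2, 0;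
        0, 1/4, -(1/4), 0, 0, -(r/2);
        0, -(1/4), 1/4, 0, 0, r/2;
        1/4, 0, 0, 1/4, r/2, 0;
        r/2, 0, 0, r/2, 1 - 2*(1/4), 0;
        0, -(r/2), r/2, 0, 0, 1 - 2*(1/4)] : Matrix (Fin 6) (Fin 6) ℝ)
      (finProdFinEquiv p) (finProdFinEquiv q)

open Matrix

lemma scaledDiscCert_eq_gram (r : ℝ) :
    scaledDiscCert r =
      vecMulVec (fun p => !![1/2, 0; 0, 1/2; r, 0] p.1 p.2)
          (fun p => !![1/2, 0; 0, 1/2; r, 0] p.1 p.2) +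
        vecMulVec (fun p => !![0, -(1/2); 1/2, 0; 0, r] p.1 p.2)
          (fun p => !![0, -(1/2); 1/2, 0; 0, r] p.1 p.2) +
        diagonal (fun p => if p.1 = 2 then 1/2 - r ^ 2 else 0) := by
  ext ⟨i, s⟩ ⟨j, t⟩
  fin_cases i <;> fin_cases s <;> fin_cases j <;> fin_cases t <;>
    simp [scaledDiscCert, finProdFinEquiv, vecMulVec] <;> ring

lemma scaledDiscCert_posSemidef {r : ℝ} (hr : r ^ 2 ≤ 1 / 2) :
    (scaledDiscCert r).PosSemidef := by
  have gram (u : Fin 3 × Fin 2 → ℝ) : (vecMulVec u u).PosSemidef := by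
    simpa using posSemidef_vecMulVec_self_star u
  rw [scaledDiscCert_eq_gram]
  refine ((gram _).add (gram _)).add (PosSemidef.diagonal fun p => ?_)
  exact ite_nonneg (sub_nonneg.2 hr) le_rfl

lemma sum_scaledDiscCert_diag_block (r : ℝ) (s t : Fin 2) :
    ∑ i : Fin 3, scaledDiscCert r (i, s) (i, t) = (1 : Matrix (Fin 2) (Fin 2) ℝ) s t := by
  fin_cases s <;> fin_cases t <;>
    simp [scaledDiscCert, Fin.sum_univ_three, finProdFinEquiv] <;> norm_num

lemma scaledDiscCert_block_zero_two_add (r : ℝ) (s t : Fin 2) :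
    scaledDiscCert r (0, s) (2, t) + scaledDiscCert r (2, s) (0, t) =
      r * !![(1 : ℝ), 0; 0, -1] s t := by
  fin_cases s <;> fin_cases t <;> simp [scaledDiscCert, finProdFinEquiv]; ring

lemma scaledDiscCert_block_one_two_add (r : ℝ) (s t : Fin 2) :
    scaledDiscCert r (1, s) (2, t) + scaledDiscCert r (2, s) (1, t) =
      r * !![(0 : ℝ), 1; 1, 0] s t := by
  fin_cases s <;> fin_cases t <;> simp [scaledDiscCert, finProdFinEquiv]

/-- In the disc example, the criterion certifies the scaled inclusion
r·S_A ⊆ S_B for 0 < r ≤ √2/2: the matrix `scaledDiscCert r` is psd and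
satisfies I₂ = ∑ᵢ C_{ii}, diag(1,−1) = (1/r)(C₁₃+C₃₁) and
E₁₂+E₂₁ = (1/r)(C₂₃+C₃₂). -/
theorem scaled_disc_criterion (r : ℝ) (hr0 : 0 < r)
    (hr : r ≤ Real.sqrt 2 / 2) :
    (scaledDiscCert r).PosSemidef ∧
    (∀ s t : Fin 2, (∑ i : Fin 3, scaledDiscCert r (i, s) (i, t)) =
      (1 : Matrix (Fin 2) (Fin 2) ℝ) s t) ∧
    (∀ s t : Fin 2, !![(1 : ℝ), 0; 0, -1] s t =
      (1 / r) * (scaledDiscCert r (0, s) (2, t) + scaledDiscCert r (2, s) (0, t))) ∧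
    (∀ s t : Fin 2, !![(0 : ℝ), 1; 1, 0] s t =
      (1 / r) * (scaledDiscCert r (1, s) (2, t) + scaledDiscCert r (2, s) (1, t))) := by
  have hr2 : r ^ 2 ≤ 1 / 2 := by
    calc r ^ 2 ≤ (Real.sqrt 2 / 2) ^ 2 := pow_le_pow_left₀ hr0.le hr 2
      _ = 1 / 2 := by rw [div_pow, Real.sq_sqrt zero_le_two]; norm_num
  refine ⟨scaledDiscCert_posSemidef hr2, sum_scaledDiscCert_diag_block r, fun s t => ?_,
    fun s t => ?_⟩
  · rw [scaledDiscCert_block_zero_two_add, one_div, inv_mul_cancel_left₀ hr0.ne']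
  · rw [scaledDiscCert_block_one_two_add, one_div, inv_mul_cancel_left₀ hr0.ne']
end

section
/- Rounding lemma from the 3-SAT reduction: let p ∈ [−1,1]^n satisfy |p_i| ≥ 1 − ε for all i with 0 < ε < 1/3, and suppose p satisfies a clause inequality σ_1 p_{i_1} + σ_2 p_{i_2} + σ_3 p_{i_3} ≥ −1 with signs σ_j ∈ {−1, +1}. Then the vector p' ∈ {−1,1}^n obtained by componentwise rounding (p'_i = 1 if p_i > 0, p'_i = −1 if p_i < 0) also satisfies σ_1 p'_{i_1} + σ_2 p'_{i_2} + σ_3 p'_{i_3} ≥ −1. -/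
/-!
Every real `x` factors as `|x| * roundSign x`, so a clause term `σ * x` equals `|x|` times the
rounded term `σ * roundSign x ∈ {−1, 1}`. Three signs summing below `−1` must all be `−1`; then
the clause sum of `p` is `−∑ |p_{i_j}| ≤ −3(1 − ε) < −1`, contradicting the hypothesis.
-/

noncomputable def roundSign (x : ℝ) : ℝ := if 0 < x then 1 else -1

lemma roundSign_eq_one_or_neg_one (x : ℝ) : roundSign x = 1 ∨ roundSign x = -1 := by
  unfold roundSign
  split_ifs <;> simp

lemma abs_mul_roundSign (x : ℝ) : |x| * roundSign x = x := by
  unfold roundSign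
  split_ifs with hx
  · simp [abs_of_pos hx]
  · simp [abs_of_nonpos (not_lt.mp hx)]

lemma mul_eq_one_or_neg_one {a b : ℝ} (ha : a = 1 ∨ a = -1) (hb : b = 1 ∨ b = -1) :
    a * b = 1 ∨ a * b = -1 := by
  rcases ha with rfl | rfl <;> rcases hb with rfl | rfl <;> norm_num

lemma mul_eq_neg_abs_of_mul_roundSign_eq_neg_one {s x : ℝ} (h : s * roundSign x = -1) :
    s * x = -|x| := by
  calc s * x = |x| * (s * roundSign x) := by rw [mul_left_comm, abs_mul_roundSign]
    _ = -|x| := by rw [h, mul_neg_one]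

lemma eq_neg_one_of_sum_lt_neg_one {t : Fin 3 → ℝ} (ht : ∀ j, t j = 1 ∨ t j = -1)
    (hsum : ∑ j, t j < -1) (j : Fin 3) : t j = -1 := by
  rw [Fin.sum_univ_three] at hsum
  rcases ht 0 with h0 | h0 <;> rcases ht 1 with h1 | h1 <;> rcases ht 2 with h2 | h2 <;>
    fin_cases j <;> simp_all <;> linarith

theorem rounding_lemma_general {n : ℕ} (p : Fin n → ℝ) (ε : ℝ)
    (hε : ε < 1 / 3)
    (hclose : ∀ i, 1 - ε ≤ |p i|)
    (σ : Fin 3 → ℝ) (hσ : ∀ j, σ j = 1 ∨ σ j = -1)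
    (idx : Fin 3 → Fin n)
    (hineq : -1 ≤ ∑ j : Fin 3, σ j * p (idx j)) :
    -1 ≤ ∑ j : Fin 3, σ j * (if 0 < p (idx j) then (1 : ℝ) else -1) := by
  by_contra! hlt
  have hall : ∀ j, σ j * roundSign (p (idx j)) = -1 :=
    eq_neg_one_of_sum_lt_neg_one
      (fun j => mul_eq_one_or_neg_one (hσ j) (roundSign_eq_one_or_neg_one _)) hlt
  have hsum : ∑ j : Fin 3, σ j * p (idx j) = -∑ j : Fin 3, |p (idx j)| := by
    rw [← Finset.sum_neg_distrib]
    exact Finset.sum_congr rfl fun j _ => mul_eq_neg_abs_of_mul_roundSign_eq_neg_one (hall j)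
  have hbound : ∑ _j : Fin 3, (1 - ε) ≤ ∑ j : Fin 3, |p (idx j)| :=
    Finset.sum_le_sum fun j _ => hclose (idx j)
  rw [Fin.sum_const, nsmul_eq_mul] at hbound
  push_cast at hbound
  linarith

/-- Rounding lemma from the 3-SAT reduction: if p ∈ [−1,1]ⁿ has all
coordinates within ε < 1/3 of ±1 and satisfies a clause inequality
σ₁ p_{i₁} + σ₂ p_{i₂} + σ₃ p_{i₃} ≥ −1 with σⱼ ∈ {−1,1}, then the
componentwise rounded ±1 vector also satisfies it. -/
theorem rounding_lemma {n : ℕ} (p : Fin n → ℝ) (ε : ℝ)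
    (hε0 : 0 < ε) (hε : ε < 1 / 3)
    (hbox : ∀ i, |p i| ≤ 1)
    (hclose : ∀ i, 1 - ε ≤ |p i|)
    (σ : Fin 3 → ℝ) (hσ : ∀ j, σ j = 1 ∨ σ j = -1)
    (idx : Fin 3 → Fin n) (hidx : Function.Injective idx)
    (hineq : -1 ≤ ∑ j : Fin 3, σ j * p (idx j)) :
    -1 ≤ ∑ j : Fin 3, σ j * (if 0 < p (idx j) then (1 : ℝ) else -1) :=
  rounding_lemma_general p ε hε hclose σ hσ idx hineq
end
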